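/- Let K be a compact topological space and B a complex unital Banach algebra. For a continuous function f : K → B, the spectrum of f in the Banach algebra C(K, B) equals the union over x ∈ K of the spectra σ(f(x)) in B. -/

import Mathlib

/-! `algebraMap z - f` takes the value `algebraMap z - f x` at `x`, and a continuous function into
a complete normed ring is a unit of `C(X, R)` iff it is pointwise a unit, since inversion is
continuous on `Rˣ`. -/

theorem ContinuousMap.spectrum_eq_iUnion {X 𝕜 R : Type*} [TopologicalSpace X] [CommSemiring 𝕜]
    [NormedRing R] [CompleteSpace R] [Algebra 𝕜 R] (f : C(X, R)) :
    spectrum 𝕜 f = ⋃ x, spectrum 𝕜 (f x) := by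
  ext z
  simp only [Set.mem_iUnion, spectrum.mem_iff, ContinuousMap.isUnit_iff_forall_isUnit, not_forall]
  rfl

theorem spectrum_continuousMap_eq_iUnion_general {K : Type*} [TopologicalSpace K]
    {B : Type*} [NormedRing B] [NormedAlgebra ℂ B] [CompleteSpace B]
    (f : C(K, B)) :
    spectrum ℂ f = ⋃ x : K, spectrum ℂ (f x) :=
  ContinuousMap.spectrum_eq_iUnion f

/-- For a compact space `K` and a complex unital Banach algebra `B`, the spectrum of
`f ∈ C(K, B)` is the union of the spectra of the values `f x`. -/
theorem spectrum_continuousMap_eq_iUnion {K : Type*} [TopologicalSpace K] [CompactSpace K]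
    {B : Type*} [NormedRing B] [NormedAlgebra ℂ B] [CompleteSpace B]
    (f : C(K, B)) :
    spectrum ℂ f = ⋃ x : K, spectrum ℂ (f x) :=
  spectrum_continuousMap_eq_iUnion_general f
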